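/- arXiv:1604.03224 — 2 statements merged into one kernel-verified Lean document; each statement's English description precedes it below -/
import Mathlib

section
/- Let L be a positive integer and assume λ is multiplicative and r(p) > 0 for every prime p | L. Then Σ_{d | L} ξ_d(1)² = ∏_{p^e ∥ L} ( 1 + λ(p)²/(r(p)·p·β(p)²) + χ(p)·(1 − μ(p^e)²)/(r(p²)·p²·α(p²)) ), where the product runs over primes p with p^e exactly dividing L (p^e | L and p^{e+1} ∤ L). -/
open scoped BigOperators
open Finset

noncomputable section

/-- A multiplicative arithmetic function: `λ(1) = 1` and
`λ(ab) = λ(a)λ(b)` whenever `gcd(a,b) = 1`. -/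
def IsMult (lam : ℕ → ℝ) : Prop :=
  lam 1 = 1 ∧ ∀ a b : ℕ, Nat.Coprime a b → lam (a * b) = lam a * lam b

/-- The trivial character mod `M`: `χ(n) = 1` if `gcd(n,M) = 1`, else `0`. -/
def chi (M n : ℕ) : ℝ := if Nat.gcd n M = 1 then 1 else 0

/-- `σ(b) = Σ_{r | b} χ(r)/r` (twisted divisor sum). -/
def sigTw (M b : ℕ) : ℝ := ∑ r ∈ b.divisors, chi M r / r

/-- `r(c) = Σ_{b | c} μ(b)λ(b)² / (b σ(b)²)`. -/
def rF (M : ℕ) (lam : ℕ → ℝ) (c : ℕ) : ℝ :=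
  ∑ b ∈ c.divisors,
    (ArithmeticFunction.moebius b : ℝ) * (lam b) ^ 2 / (b * (sigTw M b) ^ 2)

/-- `α(c) = Σ_{b | c} χ(b)μ(b)/b²`. -/
def alphaF (M c : ℕ) : ℝ :=
  ∑ b ∈ c.divisors, chi M b * (ArithmeticFunction.moebius b : ℝ) / (b : ℝ) ^ 2

/-- `β(c) = Σ_{b | c} χ(b)μ(b)²/b`. -/
def betaF (M c : ℕ) : ℝ :=
  ∑ b ∈ c.divisors, chi M b * (ArithmeticFunction.moebius b : ℝ) ^ 2 / b

/-- The multiplicative function `μ_λ` determined by `μ_λ(p) = -λ(p)`,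
`μ_λ(p²) = χ(p)`, `μ_λ(p^j) = 0` for `j ≥ 3`. -/
def muLam (M : ℕ) (lam : ℕ → ℝ) (d : ℕ) : ℝ :=
  ∏ p ∈ d.primeFactors,
    (if d.factorization p = 1 then -lam p
     else if d.factorization p = 2 then chi M p else 0)

/-- The squarefree part `d₁` of `d`. -/
def sfPart (d : ℕ) : ℕ :=
  ∏ p ∈ d.primeFactors, if d.factorization p = 1 then p else 1

/-- The squarefull part `d₂` of `d`. -/
def ffPart (d : ℕ) : ℕ :=
  ∏ p ∈ d.primeFactors, if d.factorization p = 1 then 1 else p ^ d.factorization p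

/-- `ξ'_{d₁}(g) = μ(d₁/g)λ(d₁/g) / (r(d₁)^{1/2} (d₁/g)^{1/2} β(d₁/g))` for `g ∣ d₁`. -/
def xi' (M : ℕ) (lam : ℕ → ℝ) (d₁ g : ℕ) : ℝ :=
  (ArithmeticFunction.moebius (d₁ / g) : ℝ) * lam (d₁ / g) /
    (Real.sqrt (rF M lam d₁) * Real.sqrt ((d₁ / g : ℕ) : ℝ) * betaF M (d₁ / g))

/-- `ξ''_{d₂}(g) = μ_λ(d₂/g) / ((d₂/g)^{1/2} (r(d₂)α(d₂))^{1/2})` for `g ∣ d₂`. -/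
def xi'' (M : ℕ) (lam : ℕ → ℝ) (d₂ g : ℕ) : ℝ :=
  muLam M lam (d₂ / g) /
    (Real.sqrt ((d₂ / g : ℕ) : ℝ) * Real.sqrt (rF M lam d₂ * alphaF M d₂))

/-- `ξ_d(ℓ) = ξ'_{d₁}(gcd(d₁,ℓ)) ξ''_{d₂}(gcd(d₂,ℓ))`. -/
def xi (M : ℕ) (lam : ℕ → ℝ) (d ℓ : ℕ) : ℝ :=
  xi' M lam (sfPart d) (Nat.gcd (sfPart d) ℓ) *
    xi'' M lam (ffPart d) (Nat.gcd (ffPart d) ℓ)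

/-!
On divisors `d ∣ L` the square roots in `ξ_d(1)` can be cleared, since `r` is positive there
(`r(p^k) = r(p)`) and `α` is always positive. This turns `ξ_d(1)²` into
`xiWeight d = sfWeight d₁ · ffWeight d₂`, where `sfWeight` and `ffWeight` are multiplicative, being
built from the multiplicative functions `μ, λ, r, β, α, μ_λ`. The maps `d ↦ d₁` and `d ↦ d₂` are
multiplicative and send coprime pairs to coprime pairs, so `xiWeight` is multiplicative and
`Σ_{d ∣ L} xiWeight d` is the Euler product of the local sums `Σ_{i ≤ e} xiWeight (p^i)`. Locally
`xiWeight p = λ(p)²/(r(p) p β(p)²)`, `xiWeight p² = χ(p)/(r(p²) p² α(p²))`, and `xiWeight p^i = 0`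
for `i ≥ 3` because `μ_λ` vanishes there.
-/

open ArithmeticFunction
open scoped ArithmeticFunction.Moebius ArithmeticFunction.zeta

lemma Nat.factorization_prod_mul_of_coprime {β : Type*} [CommMonoid β] (t : ℕ → ℕ → β)
    {m n : ℕ} (h : m.Coprime n) :
    (m * n).factorization.prod t = m.factorization.prod t * n.factorization.prod t := by
  rw [Nat.factorization_mul_of_coprime h,
    Finsupp.prod_add_index_of_disjoint h.disjoint_primeFactors]

lemma Nat.factorization_prod_prime_pow {β : Type*} [CommMonoid β] {t : ℕ → ℕ → β}
    {p : ℕ} (hp : p.Prime) (ht : t p 0 = 1) (k : ℕ) :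
    (p ^ k).factorization.prod t = t p k := by
  rw [hp.factorization_pow, Finsupp.prod_single_index ht]

namespace IsMult

variable {f g : ℕ → ℝ}

lemma mul (hf : IsMult f) (hg : IsMult g) : IsMult fun n => f n * g n :=
  ⟨by simp only [hf.1, hg.1, one_mul], fun a b h => by simp only [hf.2 a b h, hg.2 a b h]; ring⟩

lemma div (hf : IsMult f) (hg : IsMult g) : IsMult fun n => f n / g n :=
  ⟨by simp only [hf.1, hg.1, div_one], fun a b h => by
    simp only [hf.2 a b h, hg.2 a b h, mul_div_mul_comm]⟩

lemma pow (hf : IsMult f) (k : ℕ) : IsMult fun n => f n ^ k :=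
  ⟨by simp only [hf.1, one_pow], fun a b h => by simp only [hf.2 a b h, mul_pow]⟩

lemma comp (hf : IsMult f) {φ : ℕ → ℕ} (hφ1 : φ 1 = 1)
    (hφ : ∀ m n, m.Coprime n → φ (m * n) = φ m * φ n) (hdvd : ∀ n, φ n ∣ n) :
    IsMult fun n => f (φ n) :=
  ⟨by simp only [hφ1, hf.1], fun a b h => by
    simp only [hφ a b h, hf.2 _ _ ((h.coprime_dvd_left (hdvd a)).coprime_dvd_right (hdvd b))]⟩

lemma sum_divisors (hf : IsMult f) : IsMult fun n => ∑ d ∈ n.divisors, f d := by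
  let F : ArithmeticFunction ℝ := ⟨fun n => if n = 0 then 0 else f n, if_pos rfl⟩
  have hF : F.IsMultiplicative := IsMultiplicative.iff_ne_zero.2
    ⟨by simp [F, hf.1], fun {m n} hm hn h => by simp [F, hm, hn, hf.2 m n h]⟩
  have hsum (n : ℕ) : ∑ d ∈ n.divisors, f d = (F * ζ) n := by
    rw [coe_mul_zeta_apply]
    exact sum_congr rfl fun d hd => by simp [F, (Nat.pos_of_mem_divisors hd).ne']
  refine ⟨by simp [hf.1], fun m n h => ?_⟩
  simp only [hsum]
  exact (hF.mul isMultiplicative_zeta.natCast).map_mul_of_coprime h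

lemma eq_prod_primeFactors (hf : IsMult f) {n : ℕ} (hn : n ≠ 0) :
    f n = ∏ p ∈ n.primeFactors, f (p ^ n.factorization p) :=
  Nat.multiplicative_factorization f hf.2 hf.1 hn

lemma pos (hf : IsMult f) {n : ℕ} (hn : n ≠ 0)
    (h : ∀ p ∈ n.primeFactors, 0 < f (p ^ n.factorization p)) : 0 < f n := by
  rw [hf.eq_prod_primeFactors hn]
  exact prod_pos h

lemma sum_divisors_eq_prod (hf : IsMult f) {n : ℕ} (hn : n ≠ 0) :
    ∑ d ∈ n.divisors, f d =
      ∏ p ∈ n.primeFactors, ∑ i ∈ range (n.factorization p + 1), f (p ^ i) := by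
  rw [hf.sum_divisors.eq_prod_primeFactors hn]
  exact prod_congr rfl fun p hp => Nat.sum_divisors_prime_pow (Nat.prime_of_mem_primeFactors hp)

end IsMult

lemma isMult_natCast : IsMult fun n => (n : ℝ) :=
  ⟨Nat.cast_one, fun a b _ => Nat.cast_mul a b⟩

lemma isMult_moebius : IsMult fun n => (μ n : ℝ) :=
  ⟨by simp, fun a b h => by
    simp only [isMultiplicative_moebius.map_mul_of_coprime h, Int.cast_mul]⟩

lemma isMult_factorization_prod (t : ℕ → ℕ → ℝ) : IsMult fun n => n.factorization.prod t :=
  ⟨by simp, fun _ _ h => Nat.factorization_prod_mul_of_coprime t h⟩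

lemma chi_mul (M a b : ℕ) : chi M (a * b) = chi M a * chi M b := by
  by_cases ha : a.Coprime M <;> by_cases hb : b.Coprime M <;>
    simp_all [chi, ← Nat.coprime_iff_gcd_eq_one, Nat.coprime_mul_iff_left]

lemma isMult_chi (M : ℕ) : IsMult (chi M) :=
  ⟨by simp [chi], fun a b _ => chi_mul M a b⟩

section DivisorSums

variable (M : ℕ) {lam : ℕ → ℝ}

lemma isMult_sigTw : IsMult (sigTw M) :=
  ((isMult_chi M).div isMult_natCast).sum_divisors

lemma isMult_rF (hlam : IsMult lam) : IsMult (rF M lam) :=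
  ((isMult_moebius.mul (hlam.pow 2)).div
    (isMult_natCast.mul ((isMult_sigTw M).pow 2))).sum_divisors

lemma isMult_alphaF : IsMult (alphaF M) :=
  (((isMult_chi M).mul isMult_moebius).div (isMult_natCast.pow 2)).sum_divisors

lemma isMult_betaF : IsMult (betaF M) :=
  (((isMult_chi M).mul (isMult_moebius.pow 2)).div isMult_natCast).sum_divisors

lemma isMult_muLam (lam : ℕ → ℝ) : IsMult (muLam M lam) :=
  isMult_factorization_prod fun p k => if k = 1 then -lam p else if k = 2 then chi M p else 0

end DivisorSums

lemma sfPart_eq_factorization_prod (d : ℕ) :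
    sfPart d = d.factorization.prod fun p k => if k = 1 then p else 1 := rfl

lemma ffPart_eq_factorization_prod (d : ℕ) :
    ffPart d = d.factorization.prod fun p k => if k = 1 then 1 else p ^ k := rfl

lemma sfPart_mul_ffPart {d : ℕ} (hd : d ≠ 0) : sfPart d * ffPart d = d := by
  rw [sfPart_eq_factorization_prod, ffPart_eq_factorization_prod, ← Finsupp.prod_mul]
  conv_rhs => rw [← Nat.prod_factorization_pow_eq_self hd]
  refine Finsupp.prod_congr fun p _ => ?_
  split_ifs <;> simp [*]

lemma sfPart_dvd (d : ℕ) : sfPart d ∣ d := by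
  rcases eq_or_ne d 0 with rfl | hd
  · exact dvd_zero _
  · exact Dvd.intro _ (sfPart_mul_ffPart hd)

lemma ffPart_dvd (d : ℕ) : ffPart d ∣ d := by
  rcases eq_or_ne d 0 with rfl | hd
  · exact dvd_zero _
  · exact Dvd.intro_left _ (sfPart_mul_ffPart hd)

lemma sfPart_mul {m n : ℕ} (h : m.Coprime n) : sfPart (m * n) = sfPart m * sfPart n := by
  simp only [sfPart_eq_factorization_prod]
  exact Nat.factorization_prod_mul_of_coprime _ h

lemma ffPart_mul {m n : ℕ} (h : m.Coprime n) : ffPart (m * n) = ffPart m * ffPart n := by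
  simp only [ffPart_eq_factorization_prod]
  exact Nat.factorization_prod_mul_of_coprime _ h

lemma sfPart_prime_pow {p : ℕ} (hp : p.Prime) (k : ℕ) :
    sfPart (p ^ k) = if k = 1 then p else 1 := by
  rw [sfPart_eq_factorization_prod]
  exact Nat.factorization_prod_prime_pow hp (by simp) k

lemma ffPart_prime_pow {p : ℕ} (hp : p.Prime) (k : ℕ) :
    ffPart (p ^ k) = if k = 1 then 1 else p ^ k := by
  rw [ffPart_eq_factorization_prod]
  exact Nat.factorization_prod_prime_pow hp (by simp) k

section LocalValues

variable (M : ℕ) {p : ℕ}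

lemma sum_divisors_prime_pow_eq_of_vanish {f : ℕ → ℝ} (hp : p.Prime) {k : ℕ} (hk : k ≠ 0)
    (hf : ∀ i, 2 ≤ i → f (p ^ i) = 0) :
    ∑ b ∈ (p ^ k).divisors, f b = f 1 + f p := by
  obtain ⟨n, rfl⟩ : ∃ n, k = n + 1 := Nat.exists_eq_succ_of_ne_zero hk
  rw [Nat.sum_divisors_prime_pow hp, show n + 1 + 1 = 2 + n by omega, sum_range_add,
    sum_eq_zero fun i _ => hf (2 + i) (by omega)]
  simp [sum_range_succ]

lemma moebius_prime_pow_of_two_le (hp : p.Prime) {i : ℕ} (hi : 2 ≤ i) : μ (p ^ i) = 0 := by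
  rw [moebius_apply_prime_pow hp (by omega), if_neg (by omega)]

lemma rF_prime_pow (lam : ℕ → ℝ) (hp : p.Prime) {k : ℕ} (hk : k ≠ 0) :
    rF M lam (p ^ k) = rF M lam p := by
  have hsum {j : ℕ} (hj : j ≠ 0) :=
    sum_divisors_prime_pow_eq_of_vanish
      (f := fun b => (μ b : ℝ) * lam b ^ 2 / (b * sigTw M b ^ 2)) hp hj
      fun i hi => by simp [moebius_prime_pow_of_two_le hp hi]
  rw [rF, rF]
  simpa only [pow_one] using (hsum hk).trans (hsum one_ne_zero).symm

lemma alphaF_prime_pow (hp : p.Prime) {k : ℕ} (hk : k ≠ 0) :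
    alphaF M (p ^ k) = 1 - chi M p / (p : ℝ) ^ 2 := by
  rw [alphaF, sum_divisors_prime_pow_eq_of_vanish hp hk
    fun i hi => by simp [moebius_prime_pow_of_two_le hp hi]]
  simp [moebius_apply_prime hp, (isMult_chi M).1]
  ring

lemma muLam_prime_pow (lam : ℕ → ℝ) (hp : p.Prime) {k : ℕ} (hk : k ≠ 0) :
    muLam M lam (p ^ k) = if k = 1 then -lam p else if k = 2 then chi M p else 0 := by
  rw [muLam, Nat.primeFactors_prime_pow hk hp, prod_singleton, hp.factorization_pow,
    Finsupp.single_eq_same]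

end LocalValues

section Positivity

variable (M : ℕ) {lam : ℕ → ℝ}

lemma alphaF_pos {n : ℕ} (hn : n ≠ 0) : 0 < alphaF M n := by
  refine (isMult_alphaF M).pos hn fun p hp => ?_
  have hp' := Nat.prime_of_mem_primeFactors hp
  rw [alphaF_prime_pow M hp' (Finsupp.mem_support_iff.mp hp)]
  have hp2 : (4 : ℝ) ≤ (p : ℝ) ^ 2 := by
    have : (2 : ℝ) ≤ p := by exact_mod_cast hp'.two_le
    nlinarith
  have hchi : chi M p ≤ 1 := by unfold chi; split_ifs <;> norm_num
  have : chi M p / (p : ℝ) ^ 2 ≤ 1 / 4 := div_le_div₀ (by norm_num) hchi (by norm_num) hp2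
  linarith

lemma rF_pos (hlam : IsMult lam) {n : ℕ} (hn : n ≠ 0)
    (hr : ∀ p ∈ n.primeFactors, 0 < rF M lam p) : 0 < rF M lam n :=
  (isMult_rF M hlam).pos hn fun p hp => by
    rw [rF_prime_pow M lam (Nat.prime_of_mem_primeFactors hp) (Finsupp.mem_support_iff.mp hp)]
    exact hr p hp

end Positivity

section Weights

variable (M : ℕ) (lam : ℕ → ℝ)

def sfWeight (n : ℕ) : ℝ := ((μ n : ℝ) * lam n) ^ 2 / (rF M lam n * n * betaF M n ^ 2)

def ffWeight (n : ℕ) : ℝ := muLam M lam n ^ 2 / (n * (rF M lam n * alphaF M n))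

def xiWeight (d : ℕ) : ℝ := sfWeight M lam (sfPart d) * ffWeight M lam (ffPart d)

variable {M lam}

lemma xi'_one_sq {n : ℕ} (h : 0 ≤ rF M lam n) : xi' M lam n 1 ^ 2 = sfWeight M lam n := by
  rw [xi', sfWeight, Nat.div_one, div_pow, mul_pow, mul_pow, mul_pow, Real.sq_sqrt h,
    Real.sq_sqrt n.cast_nonneg]

lemma xi''_one_sq {n : ℕ} (h : 0 ≤ rF M lam n * alphaF M n) :
    xi'' M lam n 1 ^ 2 = ffWeight M lam n := by
  rw [xi'', ffWeight, Nat.div_one, div_pow, mul_pow, Real.sq_sqrt h, Real.sq_sqrt n.cast_nonneg]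

lemma xi_one_sq_of_dvd (hlam : IsMult lam) {L : ℕ} (hL : L ≠ 0)
    (hr : ∀ p : ℕ, p.Prime → p ∣ L → 0 < rF M lam p) {d : ℕ} (hd : d ∣ L) :
    xi M lam d 1 ^ 2 = xiWeight M lam d := by
  have hrpos {n : ℕ} (hn : n ∣ L) : 0 < rF M lam n :=
    rF_pos M hlam (ne_zero_of_dvd_ne_zero hL hn) fun p hp =>
      hr p (Nat.prime_of_mem_primeFactors hp) ((Nat.dvd_of_mem_primeFactors hp).trans hn)
  have hffL : ffPart d ∣ L := (ffPart_dvd d).trans hd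
  rw [xi, Nat.gcd_one_right, Nat.gcd_one_right, mul_pow,
    xi'_one_sq (hrpos ((sfPart_dvd d).trans hd)).le,
    xi''_one_sq (mul_pos (hrpos hffL) (alphaF_pos M (ne_zero_of_dvd_ne_zero hL hffL))).le,
    xiWeight]

variable (M)

lemma isMult_sfWeight (hlam : IsMult lam) : IsMult (sfWeight M lam) :=
  ((isMult_moebius.mul hlam).pow 2).div
    (((isMult_rF M hlam).mul isMult_natCast).mul ((isMult_betaF M).pow 2))

lemma isMult_ffWeight (hlam : IsMult lam) : IsMult (ffWeight M lam) :=
  ((isMult_muLam M lam).pow 2).div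
    (isMult_natCast.mul ((isMult_rF M hlam).mul (isMult_alphaF M)))

lemma isMult_xiWeight (hlam : IsMult lam) : IsMult (xiWeight M lam) :=
  ((isMult_sfWeight M hlam).comp (by simp [sfPart]) (fun _ _ => sfPart_mul) sfPart_dvd).mul
    ((isMult_ffWeight M hlam).comp (by simp [ffPart]) (fun _ _ => ffPart_mul) ffPart_dvd)

end Weights

section LocalFactor

variable (M : ℕ) {lam : ℕ → ℝ} {p : ℕ}

lemma xiWeight_prime (hlam : IsMult lam) (hp : p.Prime) :
    xiWeight M lam p = lam p ^ 2 / (rF M lam p * p * betaF M p ^ 2) := by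
  have hsf : sfPart p = p := by simpa using sfPart_prime_pow hp 1
  have hff : ffPart p = 1 := by simpa using ffPart_prime_pow hp 1
  rw [xiWeight, hsf, hff, (isMult_ffWeight M hlam).1, mul_one, sfWeight, moebius_apply_prime hp]
  simp

lemma xiWeight_prime_pow_of_two_le (hlam : IsMult lam) (hp : p.Prime) {k : ℕ} (hk : 2 ≤ k) :
    xiWeight M lam (p ^ k) =
      if k = 2 then chi M p / (rF M lam (p ^ 2) * (p : ℝ) ^ 2 * alphaF M (p ^ 2)) else 0 := by
  rw [xiWeight, sfPart_prime_pow hp, ffPart_prime_pow hp, if_neg (by omega), if_neg (by omega),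
    (isMult_sfWeight M hlam).1, one_mul, ffWeight, muLam_prime_pow M lam hp (by omega),
    if_neg (by omega)]
  split_ifs with h2
  · subst h2
    have hchi : chi M p ^ 2 = chi M p := by unfold chi; split_ifs <;> norm_num
    rw [hchi]
    push_cast
    ring
  · simp

lemma sum_range_xiWeight_prime_pow (hlam : IsMult lam) (hp : p.Prime) {e : ℕ} (he : e ≠ 0) :
    ∑ i ∈ range (e + 1), xiWeight M lam (p ^ i) =
      1 + lam p ^ 2 / (rF M lam p * p * betaF M p ^ 2)
        + chi M p * (1 - (μ (p ^ e) : ℝ) ^ 2) /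
          (rF M lam (p ^ 2) * (p : ℝ) ^ 2 * alphaF M (p ^ 2)) := by
  have h0 : xiWeight M lam (p ^ 0) = 1 := (isMult_xiWeight M hlam).1
  have h1 : xiWeight M lam (p ^ 1) = lam p ^ 2 / (rF M lam p * p * betaF M p ^ 2) := by
    rw [pow_one, xiWeight_prime M hlam hp]
  obtain rfl | he1 := eq_or_ne e 1
  · rw [sum_range_succ, sum_range_one, h0, h1, pow_one, moebius_apply_prime hp]
    simp
  obtain ⟨n, rfl⟩ : ∃ n, e = n + 2 := ⟨e - 2, by omega⟩
  have hvanish (i : ℕ) : xiWeight M lam (p ^ (3 + i)) = 0 := by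
    rw [xiWeight_prime_pow_of_two_le M hlam hp (k := 3 + i) (by omega), if_neg (by omega)]
  rw [show n + 2 + 1 = 3 + n by omega, sum_range_add, sum_eq_zero fun i _ => hvanish i,
    sum_range_succ, sum_range_succ, sum_range_one, h0, h1,
    xiWeight_prime_pow_of_two_le M hlam hp le_rfl, if_pos rfl,
    moebius_prime_pow_of_two_le hp (by omega)]
  ring

end LocalFactor

theorem sum_xi_one_sq_euler_general (M : ℕ) (L : ℕ) (hL : 0 < L)
    (lam : ℕ → ℝ) (hmult : IsMult lam)
    (hr : ∀ p : ℕ, p.Prime → p ∣ L → 0 < rF M lam p) :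
    ∑ d ∈ L.divisors, (xi M lam d 1) ^ 2 =
      ∏ p ∈ L.primeFactors,
        (1 + (lam p) ^ 2 / (rF M lam p * p * (betaF M p) ^ 2)
          + chi M p *
              (1 - ((ArithmeticFunction.moebius (p ^ L.factorization p) : ℝ)) ^ 2) /
            (rF M lam (p ^ 2) * (p : ℝ) ^ 2 * alphaF M (p ^ 2))) := by
  rw [sum_congr rfl fun d hd => xi_one_sq_of_dvd hmult hL.ne' hr (Nat.dvd_of_mem_divisors hd),
    (isMult_xiWeight M hmult).sum_divisors_eq_prod hL.ne']
  exact prod_congr rfl fun p hp => sum_range_xiWeight_prime_pow M hmult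
    (Nat.prime_of_mem_primeFactors hp) (Finsupp.mem_support_iff.mp hp)

/-- If `λ` is multiplicative and `r(p) > 0` for every prime
`p ∣ L`, then `Σ_{d ∣ L} ξ_d(1)²` equals the Euler product over `p^e ∥ L` of
`1 + λ(p)²/(r(p) p β(p)²) + χ(p)(1 - μ(p^e)²)/(r(p²) p² α(p²))`. -/
theorem sum_xi_one_sq_euler (M : ℕ) (hM : 0 < M) (L : ℕ) (hL : 0 < L)
    (lam : ℕ → ℝ) (hmult : IsMult lam)
    (hr : ∀ p : ℕ, p.Prime → p ∣ L → 0 < rF M lam p) :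
    ∑ d ∈ L.divisors, (xi M lam d 1) ^ 2 =
      ∏ p ∈ L.primeFactors,
        (1 + (lam p) ^ 2 / (rF M lam p * p * (betaF M p) ^ 2)
          + chi M p *
              (1 - ((ArithmeticFunction.moebius (p ^ L.factorization p) : ℝ)) ^ 2) /
            (rF M lam (p ^ 2) * (p : ℝ) ^ 2 * alphaF M (p ^ 2))) :=
  sum_xi_one_sq_euler_general M L hL lam hmult hr
end
end

section
/- For every positive integer N, φ(N)·∏_{p prime, p | N} (1 − 1/(p² − p)) ≤ η(N) ≤ φ(N), where φ is the Euler totient function. -/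
open scoped BigOperators
open Finset

noncomputable section

/-- `η(n) = Σ_{LM = n} μ(L) · M · ∏_{p² ∣ M} (1 - 1/p²)`, the sum running over
all ordered factorizations `n = L·M` and the product over primes `p` with
`p² ∣ M`, as a real number. -/
def eta (n : ℕ) : ℝ :=
  ∑ L ∈ n.divisors,
    (ArithmeticFunction.moebius L : ℝ) * (n / L : ℕ) *
      ∏ p ∈ (n / L).primeFactors.filter (fun p => p ^ 2 ∣ n / L),
        (1 - 1 / (p : ℝ) ^ 2)

/-! The summatory function `F = η * ζ` of `η` is `F(n) = n ∏_{p² ∣ n} (1 - 1/p²)`, which is visibly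
multiplicative; hence so is `η = μ * F`, and `η(p^k) = F(p^k) - F(p^(k-1))`. This equals `φ(p)` for `k = 1`,
`p² - p - 1 = φ(p²) (1 - 1/(p² - p))` for `k = 2` and `φ(p^k) (1 - 1/p²)` for `k ≥ 3`; every such local
factor lies in `[1 - 1/(p² - p), 1]`, and multiplying over the primes dividing `N` gives both bounds. -/

theorem Nat.Coprime.prod_primeFactors_filter_pow_dvd_mul {M : Type*} [CommMonoid M]
    {m n : ℕ} (h : m.Coprime n) (k : ℕ) (g : ℕ → M) :
    ∏ p ∈ (m * n).primeFactors with p ^ k ∣ m * n, g p =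
      (∏ p ∈ m.primeFactors with p ^ k ∣ m, g p) * ∏ p ∈ n.primeFactors with p ^ k ∣ n, g p := by
  have hm : ∀ p ∈ m.primeFactors, p ^ k ∣ m * n ↔ p ^ k ∣ m := fun p hp =>
    ((h.coprime_dvd_left (Nat.dvd_of_mem_primeFactors hp)).pow_left k).dvd_mul_right
  have hn : ∀ p ∈ n.primeFactors, p ^ k ∣ m * n ↔ p ^ k ∣ n := fun p hp =>
    ((h.symm.coprime_dvd_left (Nat.dvd_of_mem_primeFactors hp)).pow_left k).dvd_mul_left
  rw [h.primeFactors_mul, filter_union, filter_congr hm, filter_congr hn,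
    prod_union (disjoint_filter_filter h.disjoint_primeFactors)]

theorem Nat.eq_prod_primeFactors_of_multiplicative {M : Type*} [CommMonoid M] (f : ℕ → M)
    (h_mult : ∀ x y : ℕ, x.Coprime y → f (x * y) = f x * f y) (hf : f 1 = 1) {n : ℕ}
    (hn : n ≠ 0) : f n = ∏ p ∈ n.primeFactors, f (p ^ n.factorization p) := by
  rw [Nat.multiplicative_factorization f h_mult hf hn, Nat.prod_factorization_eq_prod_primeFactors]

open scoped ArithmeticFunction.Moebius Nat

namespace ArithmeticFunction

theorem moebius_mul_apply_prime_pow_succ {R : Type*} [CommRing R] (f : ArithmeticFunction R)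
    {p : ℕ} (hp : p.Prime) (k : ℕ) :
    ((μ : ArithmeticFunction R) * f) (p ^ (k + 1)) = f (p ^ (k + 1)) - f (p ^ k) := by
  rw [mul_apply, Nat.sum_divisorsAntidiagonal (fun a b => (μ : ArithmeticFunction R) a * f b),
    Nat.sum_divisors_prime_pow hp, sum_range_succ', sum_range_succ']
  have hvanish : ∀ i ∈ range k, (μ : ArithmeticFunction R) (p ^ (i + 1 + 1)) = 0 := fun i _ => by
    rw [intCoe_apply, moebius_apply_prime_pow hp (by omega), if_neg (by omega), Int.cast_zero]
  rw [sum_eq_zero fun i hi => by rw [hvanish i hi, zero_mul]]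
  have hdiv : p ^ (k + 1) / p = p ^ k := by rw [pow_succ, Nat.mul_div_cancel _ hp.pos]
  rw [zero_add, zero_add, pow_one, pow_zero, Nat.div_one, hdiv, intCoe_apply, intCoe_apply,
    moebius_apply_one, moebius_apply_prime hp]
  push_cast
  ring

end ArithmeticFunction

theorem one_sub_one_div_sq_sub_self_nonneg {x : ℝ} (hx : 2 ≤ x) : 0 ≤ 1 - 1 / (x ^ 2 - x) := by
  rw [sub_nonneg, div_le_one (by nlinarith)]
  nlinarith

theorem one_sub_one_div_sq_sub_self_le {x : ℝ} (hx : 1 < x) :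
    1 - 1 / (x ^ 2 - x) ≤ 1 - 1 / x ^ 2 := by
  have hpos : 0 < x ^ 2 - x := by nlinarith
  gcongr
  linarith

def etaSummatory : ArithmeticFunction ℝ :=
  ⟨fun n => n * ∏ p ∈ n.primeFactors with p ^ 2 ∣ n, (1 - 1 / (p : ℝ) ^ 2), by simp⟩

theorem etaSummatory_apply (n : ℕ) :
    etaSummatory n = n * ∏ p ∈ n.primeFactors with p ^ 2 ∣ n, (1 - 1 / (p : ℝ) ^ 2) :=
  rfl

theorem isMultiplicative_etaSummatory : etaSummatory.IsMultiplicative := by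
  refine ⟨by simp [etaSummatory_apply], fun {m n} h => ?_⟩
  rw [etaSummatory_apply, etaSummatory_apply, etaSummatory_apply,
    h.prod_primeFactors_filter_pow_dvd_mul, Nat.cast_mul]
  ring

theorem etaSummatory_prime_pow {p : ℕ} (hp : p.Prime) (k : ℕ) :
    etaSummatory (p ^ k) = (p : ℝ) ^ k * if 2 ≤ k then 1 - 1 / (p : ℝ) ^ 2 else 1 := by
  rcases eq_or_ne k 0 with rfl | hk
  · simp [etaSummatory_apply]
  simp only [etaSummatory_apply, Nat.primeFactors_prime_pow hk hp, filter_singleton,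
    Nat.pow_dvd_pow_iff_le_right hp.one_lt, Nat.cast_pow]
  split_ifs <;> simp

theorem eta_eq_moebius_mul (n : ℕ) : eta n = ((μ : ArithmeticFunction ℝ) * etaSummatory) n := by
  rw [ArithmeticFunction.mul_apply,
    Nat.sum_divisorsAntidiagonal fun a b => (μ : ArithmeticFunction ℝ) a * etaSummatory b]
  refine sum_congr rfl fun L _ => ?_
  simp [etaSummatory_apply, mul_assoc]

theorem eta_eq_prod_primeFactors {n : ℕ} (hn : n ≠ 0) :
    eta n = ∏ p ∈ n.primeFactors, eta (p ^ n.factorization p) := by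
  have hmult := (ArithmeticFunction.isMultiplicative_moebius.intCast (R := ℝ)).mul
    isMultiplicative_etaSummatory
  simp_rw [eta_eq_moebius_mul]
  exact Nat.eq_prod_primeFactors_of_multiplicative _ (fun _ _ => hmult.2) hmult.1 hn

theorem eta_prime_pow_succ {p : ℕ} (hp : p.Prime) (k : ℕ) :
    eta (p ^ (k + 1)) = etaSummatory (p ^ (k + 1)) - etaSummatory (p ^ k) := by
  rw [eta_eq_moebius_mul, ArithmeticFunction.moebius_mul_apply_prime_pow_succ _ hp]

theorem exists_eta_prime_pow_eq_totient_mul {p k : ℕ} (hp : p.Prime) (hk : k ≠ 0) :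
    ∃ r ∈ Set.Icc (1 - 1 / ((p : ℝ) ^ 2 - p)) 1, eta (p ^ k) = φ (p ^ k) * r := by
  obtain ⟨k, rfl⟩ := Nat.exists_eq_succ_of_ne_zero hk
  have hp2 : (2 : ℝ) ≤ p := by exact_mod_cast hp.two_le
  have hsq : 0 < (p : ℝ) ^ 2 - p := by nlinarith
  have htot : (φ (p ^ (k + 1)) : ℝ) = p ^ k * (p - 1) := by
    rw [Nat.totient_prime_pow_succ hp, Nat.cast_mul, Nat.cast_sub hp.one_le]
    push_cast
    ring
  rw [eta_prime_pow_succ hp, etaSummatory_prime_pow hp, etaSummatory_prime_pow hp, htot]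
  match k with
  | 0 =>
    exact ⟨1, ⟨sub_le_self _ (by positivity), le_rfl⟩, by simp⟩
  | 1 =>
    refine ⟨1 - 1 / ((p : ℝ) ^ 2 - p), ⟨le_rfl, sub_le_self _ (by positivity)⟩, ?_⟩
    simp only [le_refl, if_true, show ¬2 ≤ 1 by omega, if_false]
    have hp0 : (p : ℝ) ^ 2 ≠ 0 := by positivity
    rw [show (p : ℝ) ^ 1 * (p - 1) = p ^ 2 - p by ring, mul_sub, mul_sub, mul_one, mul_one,
      mul_one_div_cancel hp0, mul_one_div_cancel hsq.ne']
    ring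
  | m + 2 =>
    refine ⟨1 - 1 / (p : ℝ) ^ 2, ⟨one_sub_one_div_sq_sub_self_le (by linarith),
      sub_le_self _ (by positivity)⟩, ?_⟩
    simp only [show 2 ≤ m + 2 + 1 by omega, show 2 ≤ m + 2 by omega, if_true]
    ring

theorem eta_prime_pow_bounds {p k : ℕ} (hp : p.Prime) (hk : k ≠ 0) :
    0 ≤ (φ (p ^ k) : ℝ) * (1 - 1 / ((p : ℝ) ^ 2 - p)) ∧
      (φ (p ^ k) : ℝ) * (1 - 1 / ((p : ℝ) ^ 2 - p)) ≤ eta (p ^ k) ∧ eta (p ^ k) ≤ φ (p ^ k) := by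
  obtain ⟨r, ⟨hlow, hup⟩, heta⟩ := exists_eta_prime_pow_eq_totient_mul hp hk
  have hφ : (0 : ℝ) ≤ φ (p ^ k) := Nat.cast_nonneg _
  rw [heta]
  exact ⟨mul_nonneg hφ (one_sub_one_div_sq_sub_self_nonneg (by exact_mod_cast hp.two_le)),
    mul_le_mul_of_nonneg_left hlow hφ, mul_le_of_le_one_right hφ hup⟩

/-- For every positive integer `N`,
`φ(N) ∏_{p ∣ N} (1 - 1/(p² - p)) ≤ η(N) ≤ φ(N)`. -/
theorem eta_bounds (N : ℕ) (hN : 0 < N) :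
    (Nat.totient N : ℝ) * ∏ p ∈ N.primeFactors, (1 - 1 / ((p : ℝ) ^ 2 - p)) ≤
        eta N ∧
      eta N ≤ (Nat.totient N : ℝ) := by
  have htot : (φ N : ℝ) = ∏ p ∈ N.primeFactors, (φ (p ^ N.factorization p) : ℝ) :=
    Nat.eq_prod_primeFactors_of_multiplicative (fun n => (φ n : ℝ))
      (fun _ _ h => by rw [Nat.totient_mul h, Nat.cast_mul]) (by simp) hN.ne'
  have hlocal (p : ℕ) (hp : p ∈ N.primeFactors) :=
    eta_prime_pow_bounds (Nat.prime_of_mem_primeFactors hp)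
      ((Finsupp.mem_support_iff (f := N.factorization)).mp hp)
  rw [eta_eq_prod_primeFactors hN.ne', htot, ← prod_mul_distrib]
  exact ⟨prod_le_prod (fun p hp => (hlocal p hp).1) (fun p hp => (hlocal p hp).2.1),
    prod_le_prod (fun p hp => (hlocal p hp).1.trans (hlocal p hp).2.1)
      (fun p hp => (hlocal p hp).2.2)⟩

end
end
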